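/- Let (Υ_i, ⪯_i), i = 1,…,d, be partially ordered sets and suppose φ : Υ_1 × … × Υ_d → ℝ has increasing differences. For each i, let (υ_{i,j}, α_{i,j})_{j=0}^n be elements of Υ_i satisfying α_{i,0} ⪯_i α_{i,1} ⪯_i … ⪯_i α_{i,n}, υ_{i,0} = α_{i,0}, and υ_{i,j} ⪯_i υ_{i,n} and υ_{i,j} ⪯_i α_{i,j} for every j ∈ {1,…,n}; and suppose for each i there exists a chain (υ̃_{i,j})_{j=0}^n in Υ_i with υ̃_{i,0} ⪯_i υ̃_{i,1} ⪯_i … ⪯_i υ̃_{i,n} = υ_{i,n} and υ_{i,j} ⪯_i υ̃_{i,j} ⪯_i α_{i,j} for every j ∈ {0,…,n}. Then for every direction vector ω, φ(υ_{1,n},…,υ_{d,n}) ≤ B^ω(φ)(υ, α). -/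

import Mathlib

/-!
Along the staircase `p⁰, …, p^{dn}` put `x_t = α(p^t)`, `w_t = υ̃(p^t)`, `v_t = υ(p^t)` and
consider the potential
`G_t = φ(w_t) - ∑ i, (φ(x_t with i-th entry w_{t,i}) - φ(x_t with i-th entry v_{t,i}))`.
As `υ̃_0 = υ_0 = α_0` and `υ̃_n = υ_n`, the potential starts at `φ(α_0)` and ends at `φ(υ_n)`.
A step of the staircase moves a single coordinate `c` up the chains `α` and `υ̃`; since
`v_t ≤ w_t ≤ x_t ≤ x_{t+1}`, increasing differences bound the increment `G_{t+1} - G_t` by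
`φ(x_t with c-th entry v_{t+1,c}) - φ(x_t with c-th entry v_{t,c})`, the `t`-th summand of `B^ω`.
Summing over the steps gives the inequality.
-/

open Finset

noncomputable section

/-- A direction vector: each value `i ∈ {1,…,d}` occurs exactly `n` times. -/
def IsDirVec (d n : ℕ) (ω : Fin (d * n) → Fin d) : Prop :=
  ∀ i : Fin d, (Finset.univ.filter (fun t => ω t = i)).card = n

/-- The grid point reached after the first `t` moves of the staircase determined by `ω`. -/
def gridPt (d n : ℕ) (ω : Fin (d * n) → Fin d) (t : ℕ) (i : Fin d) : ℕ :=
  (Finset.univ.filter (fun t' : Fin (d * n) => (t' : ℕ) < t ∧ ω t' = i)).card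

/-- `ψ` has increasing differences on the product of the partially ordered sets `X i`. -/
def IncreasingDifferences {k : ℕ} {X : Fin k → Type*} [∀ i, PartialOrder (X i)]
    (ψ : (∀ i, X i) → ℝ) : Prop :=
  ∀ s t : Fin k, s ≠ t → ∀ x : ∀ i, X i, ∀ xs' xs'' : X s, ∀ xt' xt'' : X t,
    xs' ≤ xs'' → xt' ≤ xt'' →
      ψ (Function.update (Function.update x s xs') t xt'') -
          ψ (Function.update (Function.update x s xs') t xt') ≤
        ψ (Function.update (Function.update x s xs'') t xt'') -
          ψ (Function.update (Function.update x s xs'') t xt')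

/-- The staircase over-estimator `B^ω(φ)(υ,α)` for arrays valued in posets. -/
def Bgen (d n : ℕ) (Υ : Fin d → Type*) (φ : (∀ i, Υ i) → ℝ) (ω : Fin (d * n) → Fin d)
    (υ α : ∀ i : Fin d, ℕ → Υ i) : ℝ :=
  φ (fun i => α i 0) +
    ∑ t : Fin (d * n),
      (φ (fun i => if i = ω t then υ i (gridPt d n ω ((t : ℕ) + 1) i)
            else α i (gridPt d n ω ((t : ℕ) + 1) i)) -
        φ (fun i => if i = ω t then υ i (gridPt d n ω (t : ℕ) i)
            else α i (gridPt d n ω (t : ℕ) i)))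

open Function

section IncreasingDifferences

variable {d : ℕ} {Υ : Fin d → Type*} [∀ i, PartialOrder (Υ i)] {φ : (∀ i, Υ i) → ℝ}

theorem IncreasingDifferences.sub_update_le (hφ : IncreasingDifferences φ) {c : Fin d}
    {a b : Υ c} (hab : a ≤ b) {x y : ∀ i, Υ i} (hxy : ∀ i, i ≠ c → x i ≤ y i) :
    φ (update x c b) - φ (update x c a) ≤ φ (update y c b) - φ (update y c a) := by
  suffices ∀ s : Finset (Fin d), φ (update x c b) - φ (update x c a) ≤
      φ (update (s.piecewise y x) c b) - φ (update (s.piecewise y x) c a) by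
    simpa using this univ
  intro s
  induction s using Finset.induction_on with
  | empty => simp
  | insert i s hi ih =>
    rw [Finset.piecewise_insert]
    by_cases hic : i = c
    · subst hic
      simpa only [update_idem] using ih
    · have hstep := hφ i c hic (s.piecewise y x) (x i) (y i) a b (hxy i hic) hab
      rw [← Finset.piecewise_eq_of_notMem s y x hi, update_eq_self] at hstep
      exact ih.trans hstep

end IncreasingDifferences

section Potential

variable {d : ℕ} {Υ : Fin d → Type*} {φ : (∀ i, Υ i) → ℝ}

def staircasePotential (φ : (∀ i, Υ i) → ℝ) (x w v : ∀ i, Υ i) : ℝ :=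
  φ w - ∑ i, (φ (update x i (w i)) - φ (update x i (v i)))

@[simp]
theorem staircasePotential_self (x w : ∀ i, Υ i) : staircasePotential φ x w w = φ w := by
  simp [staircasePotential]

variable [∀ i, PartialOrder (Υ i)]

theorem staircasePotential_update_sub_le (hφ : IncreasingDifferences φ) {x w v : ∀ i, Υ i}
    (hvw : v ≤ w) (hwx : w ≤ x) {c : Fin d} {a b e : Υ c} (hxa : x c ≤ a) (hwb : w c ≤ b) :
    staircasePotential φ (update x c a) (update w c b) (update v c e) -
        staircasePotential φ x w v ≤
      φ (update x c e) - φ (update x c (v c)) := by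
  have hw : φ (update w c b) - φ w ≤ φ (update x c b) - φ (update x c (w c)) := by
    simpa only [update_eq_self] using hφ.sub_update_le hwb fun i _ => hwx i
  have hoff : ∀ i ∈ univ.erase c,
      φ (update x i (w i)) - φ (update x i (v i)) ≤
        φ (update (update x c a) i (update w c b i)) -
          φ (update (update x c a) i (update v c e i)) := by
    intro i hi
    have hic := ne_of_mem_erase hi
    rw [update_of_ne hic, update_of_ne hic]
    have hxx : x ≤ update x c a := le_update_iff.2 ⟨hxa, fun _ _ => le_rfl⟩
    exact hφ.sub_update_le (hvw i) fun j _ => hxx j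
  have hsum := sum_le_sum hoff
  unfold staircasePotential
  rw [← add_sum_erase _ _ (mem_univ c), ← add_sum_erase _ _ (mem_univ c)]
  simp only [update_self, update_idem]
  linarith

theorem staircasePotential_sub_le_sum (hφ : IncreasingDifferences φ) {N : ℕ} (c : Fin N → Fin d)
    (x w v : ℕ → ∀ i, Υ i)
    (hx : ∀ t : Fin N, x (t + 1) = update (x t) (c t) (x (t + 1) (c t)))
    (hw : ∀ t : Fin N, w (t + 1) = update (w t) (c t) (w (t + 1) (c t)))
    (hv : ∀ t : Fin N, v (t + 1) = update (v t) (c t) (v (t + 1) (c t)))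
    (hvw : ∀ t : Fin N, v t ≤ w t) (hwx : ∀ t : Fin N, w t ≤ x t)
    (hxc : ∀ t : Fin N, x t (c t) ≤ x (t + 1) (c t))
    (hwc : ∀ t : Fin N, w t (c t) ≤ w (t + 1) (c t)) :
    staircasePotential φ (x N) (w N) (v N) - staircasePotential φ (x 0) (w 0) (v 0) ≤
      ∑ t : Fin N, (φ (update (x t) (c t) (v (t + 1) (c t))) -
        φ (update (x t) (c t) (v t (c t)))) := by
  rw [← sum_range_sub (fun t => staircasePotential φ (x t) (w t) (v t)),
    ← Fin.sum_univ_eq_sum_range]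
  refine sum_le_sum fun t _ => ?_
  have hstep := staircasePotential_update_sub_le hφ (hvw t) (hwx t) (hxc t) (hwc t)
    (e := v (t + 1) (c t))
  rwa [← hx t, ← hw t, ← hv t] at hstep

end Potential

section GridPoint

variable {d n : ℕ} {ω : Fin (d * n) → Fin d}

@[simp]
theorem gridPt_zero (i : Fin d) : gridPt d n ω 0 i = 0 := by
  simp [gridPt]

theorem gridPt_succ (t : Fin (d * n)) (i : Fin d) :
    gridPt d n ω (t + 1) i = gridPt d n ω t i + if ω t = i then 1 else 0 := by
  simp only [gridPt, card_filter]
  rw [← Fintype.sum_ite_eq t fun t' => if ω t' = i then 1 else 0, ← sum_add_distrib]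
  refine sum_congr rfl fun t' _ => ?_
  rcases lt_trichotomy t' t with h | rfl | h
  · simp [h.ne', Nat.lt_succ_of_lt (Fin.lt_def.1 h), Fin.lt_def.1 h]
  · simp
  · have h' := Fin.lt_def.1 h
    simp [h.ne, show ¬ (t' : ℕ) < t + 1 by omega, show ¬ (t' : ℕ) < t by omega]

theorem gridPt_succ_self (t : Fin (d * n)) :
    gridPt d n ω (t + 1) (ω t) = gridPt d n ω t (ω t) + 1 := by
  simp [gridPt_succ]

theorem gridPt_succ_of_ne {t : Fin (d * n)} {i : Fin d} (h : ω t ≠ i) :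
    gridPt d n ω (t + 1) i = gridPt d n ω t i := by
  simp [gridPt_succ, h]

theorem gridPt_le (hω : IsDirVec d n ω) (t : ℕ) (i : Fin d) : gridPt d n ω t i ≤ n :=
  (hω i).le.trans' <| card_le_card <| monotone_filter_right _ fun _ _ => And.right

theorem gridPt_full (hω : IsDirVec d n ω) (i : Fin d) : gridPt d n ω (d * n) i = n := by
  simpa [gridPt] using hω i

theorem gridPt_eval_succ {Υ : Fin d → Type*} (a : ∀ i, ℕ → Υ i) (t : Fin (d * n)) :
    (fun i => a i (gridPt d n ω (t + 1) i)) =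
      update (fun i => a i (gridPt d n ω t i)) (ω t) (a (ω t) (gridPt d n ω (t + 1) (ω t))) := by
  funext i
  by_cases h : i = ω t
  · subst h
    simp
  · simp [update_of_ne h, gridPt_succ_of_ne (Ne.symm h)]

theorem Bgen_eq_sum_update {Υ : Fin d → Type*} (φ : (∀ i, Υ i) → ℝ) (υ α : ∀ i, ℕ → Υ i) :
    Bgen d n Υ φ ω υ α = φ (fun i => α i 0) +
      ∑ t : Fin (d * n),
        (φ (update (fun i => α i (gridPt d n ω t i)) (ω t) (υ (ω t) (gridPt d n ω (t + 1) (ω t)))) -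
          φ (update (fun i => α i (gridPt d n ω t i)) (ω t) (υ (ω t) (gridPt d n ω t (ω t))))) := by
  have hite : ∀ (c : Fin d) (f g : ∀ i, Υ i),
      (fun i => if i = c then f i else g i) = update g c (f c) := fun c f g => by
    rw [← piecewise_singleton]
    funext i
    simp [Finset.piecewise]
  unfold Bgen
  congr 1
  refine sum_congr rfl fun t _ => ?_
  rw [hite, hite, gridPt_eval_succ α, update_idem]

end GridPoint

theorem statement_9_general
    (d n : ℕ)
    (Υ : Fin d → Type*) [∀ i, PartialOrder (Υ i)]
    (φ : (∀ i, Υ i) → ℝ)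
    (hφ : IncreasingDifferences φ)
    (υ α : ∀ i : Fin d, ℕ → Υ i)
    (hα : ∀ i, ∀ j, j < n → α i j ≤ α i (j + 1))
    (hυ0 : ∀ i, υ i 0 = α i 0)
    (hchain : ∀ i, ∃ υt : ℕ → Υ i,
      (∀ j, j < n → υt j ≤ υt (j + 1)) ∧ υt n = υ i n ∧
        ∀ j, j ≤ n → υ i j ≤ υt j ∧ υt j ≤ α i j)
    (ω : Fin (d * n) → Fin d) (hω : IsDirVec d n ω) :
    φ (fun i => υ i n) ≤ Bgen d n Υ φ ω υ α := by
  choose υt hυt_mono hυt_end hυt_between using hchain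
  have hlt : ∀ t : Fin (d * n), gridPt d n ω t (ω t) < n := fun t =>
    (gridPt_succ_self t).symm.trans_le (gridPt_le hω (t + 1) (ω t))
  have hstart : (fun i => υt i 0) = fun i => υ i 0 := funext fun i =>
    have h := hυt_between i 0 n.zero_le
    le_antisymm (h.2.trans_eq (hυ0 i).symm) h.1
  have key := staircasePotential_sub_le_sum hφ ω
    (fun t i => α i (gridPt d n ω t i)) (fun t i => υt i (gridPt d n ω t i))
    (fun t i => υ i (gridPt d n ω t i))
    (gridPt_eval_succ α) (gridPt_eval_succ υt) (gridPt_eval_succ υ)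
    (fun t i => (hυt_between i _ (gridPt_le hω t i)).1)
    (fun t i => (hυt_between i _ (gridPt_le hω t i)).2)
    (fun t => by simpa only [gridPt_succ_self] using hα _ _ (hlt t))
    (fun t => by simpa only [gridPt_succ_self] using hυt_mono _ _ (hlt t))
  simp only [gridPt_zero, gridPt_full hω, hυt_end, hstart, staircasePotential_self, hυ0] at key
  rw [Bgen_eq_sum_update]
  linarith

theorem statement_9
    (d n : ℕ) (hd : 1 ≤ d) (hn : 1 ≤ n)
    (Υ : Fin d → Type*) [∀ i, PartialOrder (Υ i)]
    (φ : (∀ i, Υ i) → ℝ)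
    (hφ : IncreasingDifferences φ)
    (υ α : ∀ i : Fin d, ℕ → Υ i)
    (hα : ∀ i, ∀ j, j < n → α i j ≤ α i (j + 1))
    (hυ0 : ∀ i, υ i 0 = α i 0)
    (hυ : ∀ i, ∀ j, 1 ≤ j → j ≤ n → υ i j ≤ υ i n ∧ υ i j ≤ α i j)
    (hchain : ∀ i, ∃ υt : ℕ → Υ i,
      (∀ j, j < n → υt j ≤ υt (j + 1)) ∧ υt n = υ i n ∧
        ∀ j, j ≤ n → υ i j ≤ υt j ∧ υt j ≤ α i j)
    (ω : Fin (d * n) → Fin d) (hω : IsDirVec d n ω) :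
    φ (fun i => υ i n) ≤ Bgen d n Υ φ ω υ α :=
  statement_9_general d n Υ φ hφ υ α hα hυ0 hchain ω hω
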